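/- Let V ⊆ Z and U ⊆ Z be Banach spaces continuously embedded in a Banach space Z, with X = U ∩ V normed by ‖u‖_X = ‖u‖_U + ‖u‖_V. Let Ψ : V → [0, +∞) be proper, lower semicontinuous, convex with Ψ(0)=0, and let Ψ̃ = Ψ|_X denote its restriction to X. Then the convex conjugate Ψ̃* : X* → (-∞,+∞] satisfies: if ξ ∈ X* extends to an element of V* (i.e., ξ is continuous for the V-norm on X and X is dense in V), then Ψ̃*(ξ) = Ψ*(ξ); in particular, if v ∈ X and η ∈ ∂_X Ψ̃(v) with Ψ̃(v) + Ψ̃*(η) = ⟨η, v⟩ < +∞ and Ψ̃* = +∞ on X* \ V*, then η ∈ V*. -/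

import Mathlib

open Topology

/-- By Baire, some sublevel set `{Ψ ≤ n}` (closed by lower semicontinuity) has interior, so `Ψ` is
bounded above near a point, and a convex function bounded above near one point is continuous. -/
theorem ConvexOn.continuous_of_lowerSemicontinuous {V : Type*} [NormedAddCommGroup V]
    [NormedSpace ℝ V] [BaireSpace V] {Ψ : V → ℝ} (hconv : ConvexOn ℝ Set.univ Ψ)
    (hlsc : LowerSemicontinuous Ψ) : Continuous Ψ := by
  have hcover : ⋃ n : ℕ, {v : V | Ψ v ≤ n} = Set.univ :=
    Set.eq_univ_of_forall fun v => Set.mem_iUnion.2 (exists_nat_ge (Ψ v))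
  obtain ⟨n, x₀, hx₀⟩ :=
    nonempty_interior_of_iUnion_of_closed (fun n : ℕ => hlsc.isClosed_preimage n) hcover
  have hbdd : (𝓝 x₀).IsBoundedUnder (· ≤ ·) Ψ :=
    Filter.isBoundedUnder_of_eventually_le (mem_interior_iff_mem_nhds.1 hx₀)
  have hbdd_iff_cont := (hconv.continuousOn_tfae isOpen_univ Set.univ_nonempty).out 3 1
  exact continuousOn_univ.1 (hbdd_iff_cont.1 ⟨x₀, Set.mem_univ x₀, hbdd⟩)

theorem DenseRange.iSup_comp_of_continuous {X V α : Type*} [TopologicalSpace X]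
    [TopologicalSpace V] [TopologicalSpace α] [ConditionallyCompleteLinearOrder α]
    [ClosedIicTopology α] {ι : X → V} (hdense : DenseRange ι) {f : V → α} (hf : Continuous f) :
    ⨆ x, f (ι x) = ⨆ v, f v := by
  rw [← iSup_range' f ι]
  exact hdense.ciSup' hf

theorem stmt19_general {V X : Type*}
    [NormedAddCommGroup V] [NormedSpace ℝ V] [CompleteSpace V]
    [NormedAddCommGroup X] [NormedSpace ℝ X]
    (ι : X →L[ℝ] V) (hdense : DenseRange ι)
    (Ψ : V → ℝ)
    (hconv : ConvexOn ℝ Set.univ Ψ) (hlsc : LowerSemicontinuous Ψ) :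
    (∀ ξV : V →L[ℝ] ℝ,
      (⨆ x : X, ((ξV (ι x) - Ψ (ι x) : ℝ) : EReal)) =
        ⨆ v : V, ((ξV v - Ψ v : ℝ) : EReal)) ∧
    (∀ (v : X) (η : X →L[ℝ] ℝ),
      (∀ w : X, ((Ψ (ι v) : ℝ) : EReal) + ((η (w - v) : ℝ) : EReal) ≤ ((Ψ (ι w) : ℝ) : EReal)) →
      (((Ψ (ι v) : ℝ) : EReal) + (⨆ x : X, ((η x - Ψ (ι x) : ℝ) : EReal)) = ((η v : ℝ) : EReal)) →
      (∀ ζ : X →L[ℝ] ℝ, (¬ ∃ ζV : V →L[ℝ] ℝ, ∀ x, ζ x = ζV (ι x)) →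
        (⨆ x : X, ((ζ x - Ψ (ι x) : ℝ) : EReal)) = ⊤) →
      ∃ ηV : V →L[ℝ] ℝ, ∀ x, η x = ηV (ι x)) := by
  have hcont : Continuous Ψ := hconv.continuous_of_lowerSemicontinuous hlsc
  refine ⟨fun ξV => ?_, fun v η _ hfenchel hinfinite => ?_⟩
  · exact hdense.iSup_comp_of_continuous (f := fun v => ((ξV v - Ψ v : ℝ) : EReal))
      (continuous_coe_real_ereal.comp (ξV.continuous.sub hcont))
  · by_contra hnot
    rw [hinfinite η hnot, EReal.add_top_of_ne_bot (EReal.coe_ne_bot _)] at hfenchel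
    exact EReal.coe_ne_top _ hfenchel.symm

/-- Let `ι : X → V` be a continuous dense embedding (modelling
`X = U ∩ V ⊂ V`) and `Ψ : V → [0,∞)` proper lsc convex with `Ψ(0)=0`, with
restriction `Ψ̃ = Ψ ∘ ι`. Then (i) for every functional `ξ` on `X` extending to
`ξV ∈ V*`, one has `Ψ̃*(ξ) = Ψ*(ξV)`; and (ii) if `v ∈ X`, `η ∈ ∂_X Ψ̃(v)` with
`Ψ̃(v) + Ψ̃*(η) = ⟨η, v⟩ < +∞`, and `Ψ̃* = +∞` on `X* \ V*`, then `η ∈ V*`. -/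
theorem stmt19 {V X : Type*}
    [NormedAddCommGroup V] [NormedSpace ℝ V] [CompleteSpace V]
    [NormedAddCommGroup X] [NormedSpace ℝ X]
    (ι : X →L[ℝ] V) (hdense : DenseRange ι)
    (Ψ : V → ℝ) (hnn : ∀ v, 0 ≤ Ψ v) (h0 : Ψ 0 = 0)
    (hconv : ConvexOn ℝ Set.univ Ψ) (hlsc : LowerSemicontinuous Ψ) :
    (∀ ξV : V →L[ℝ] ℝ,
      (⨆ x : X, ((ξV (ι x) - Ψ (ι x) : ℝ) : EReal)) =
        ⨆ v : V, ((ξV v - Ψ v : ℝ) : EReal)) ∧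
    (∀ (v : X) (η : X →L[ℝ] ℝ),
      (∀ w : X, ((Ψ (ι v) : ℝ) : EReal) + ((η (w - v) : ℝ) : EReal) ≤ ((Ψ (ι w) : ℝ) : EReal)) →
      (((Ψ (ι v) : ℝ) : EReal) + (⨆ x : X, ((η x - Ψ (ι x) : ℝ) : EReal)) = ((η v : ℝ) : EReal)) →
      (∀ ζ : X →L[ℝ] ℝ, (¬ ∃ ζV : V →L[ℝ] ℝ, ∀ x, ζ x = ζV (ι x)) →
        (⨆ x : X, ((ζ x - Ψ (ι x) : ℝ) : EReal)) = ⊤) →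
      ∃ ηV : V →L[ℝ] ℝ, ∀ x, η x = ηV (ι x)) :=
  stmt19_general ι hdense Ψ hconv hlsc
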